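/- arXiv:2605.09975 — 2 statements merged into one kernel-verified Lean document; each statement's English description precedes it below -/
import Mathlib

section
/- Let ĝ_1,...,ĝ_m ∈ R^n be unit vectors and suppose the system ĝ_i^T w = 1 (i = 1,...,m) is feasible. Then the equality-constrained problem max_{v,r} r subject to ĝ_i^T v = r for all i and ‖v‖_2 ≤ 1 has optimal value r̃ = 1/‖w*‖_2 and optimal direction ṽ = w*/‖w*‖_2, where w* is the minimum ℓ_2-norm solution of Ĝ^T w = 1_m with Ĝ = [ĝ_1,...,ĝ_m]. -/
/-!
Rescaling `v ↦ r⁻¹ • v` (for `r > 0`) turns a feasible point `(v, r)` of the Chebyshev problem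
into a solution of `⟪g i, w⟫ = 1` of norm at most `r⁻¹`, so minimality of `w⋆` gives
`‖w⋆‖ ≤ r⁻¹`. Conversely `‖w⋆‖⁻¹ • w⋆` is a unit vector with `⟪g i, ·⟫ = ‖w⋆‖⁻¹`.
-/

open scoped RealInnerProductSpace

section Chebyshev

variable {E ι : Type*} [NormedAddCommGroup E] [InnerProductSpace ℝ E]

def chebyshevValues (g : ι → E) : Set ℝ :=
  {r | ∃ v : E, ‖v‖ ≤ 1 ∧ ∀ i, ⟪g i, v⟫ = r}

variable {g : ι → E} {w : E}

lemma inner_smul_eq_of_forall_inner_eq_one (hw : ∀ i, ⟪g i, w⟫ = 1) (c : ℝ) (i : ι) :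
    ⟪g i, c • w⟫ = c := by
  rw [real_inner_smul_right, hw i, mul_one]

lemma ne_zero_of_forall_inner_eq_one [Nonempty ι] (hw : ∀ i, ⟪g i, w⟫ = 1) : w ≠ 0 := by
  rintro rfl
  simpa using hw (Classical.arbitrary ι)

lemma le_inv_norm_of_mem_chebyshevValues (hw₀ : w ≠ 0)
    (hmin : ∀ u : E, (∀ i, ⟪g i, u⟫ = 1) → ‖w‖ ≤ ‖u‖) {r : ℝ} (hr : r ∈ chebyshevValues g) :
    r ≤ ‖w‖⁻¹ := by
  obtain ⟨v, hv, hvr⟩ := hr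
  rcases le_or_gt r 0 with hr₀ | hr₀
  · exact hr₀.trans (inv_nonneg.mpr (norm_nonneg w))
  have hsol : ∀ i, ⟪g i, r⁻¹ • v⟫ = 1 := fun i => by
    rw [real_inner_smul_right, hvr i, inv_mul_cancel₀ hr₀.ne']
  have hw_le : ‖w‖ ≤ r⁻¹ :=
    calc ‖w‖ ≤ ‖r⁻¹ • v‖ := hmin _ hsol
      _ = r⁻¹ * ‖v‖ := by rw [norm_smul, Real.norm_of_nonneg (inv_nonneg.mpr hr₀.le)]
      _ ≤ r⁻¹ := mul_le_of_le_one_right (inv_nonneg.mpr hr₀.le) hv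
  exact (le_inv_comm₀ hr₀ (norm_pos_iff.mpr hw₀)).mpr hw_le

lemma norm_inv_norm_smul_le_one (w : E) : ‖‖w‖⁻¹ • w‖ ≤ 1 := by
  rw [norm_smul, norm_inv, norm_norm]
  exact inv_mul_le_one

theorem isGreatest_chebyshevValues [Nonempty ι] (hw : ∀ i, ⟪g i, w⟫ = 1)
    (hmin : ∀ u : E, (∀ i, ⟪g i, u⟫ = 1) → ‖w‖ ≤ ‖u‖) :
    IsGreatest (chebyshevValues g) ‖w‖⁻¹ :=
  ⟨⟨_, norm_inv_norm_smul_le_one w, inner_smul_eq_of_forall_inner_eq_one hw _⟩,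
    fun _ => le_inv_norm_of_mem_chebyshevValues (ne_zero_of_forall_inner_eq_one hw) hmin⟩

end Chebyshev

theorem config_equivalence_min_norm_general
    (n m : ℕ) (hm : 0 < m)
    (ghat : Fin m → EuclideanSpace ℝ (Fin n))
    (wstar : EuclideanSpace ℝ (Fin n))
    (hsol : ∀ i, ⟪ghat i, wstar⟫ = 1)
    (hmin : ∀ w : EuclideanSpace ℝ (Fin n), (∀ i, ⟪ghat i, w⟫ = 1) → ‖wstar‖ ≤ ‖w‖) :
    IsGreatest {r : ℝ | ∃ v : EuclideanSpace ℝ (Fin n), ‖v‖ ≤ 1 ∧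
        ∀ i, ⟪ghat i, v⟫ = r} (1 / ‖wstar‖) ∧
    (‖(‖wstar‖⁻¹ • wstar : EuclideanSpace ℝ (Fin n))‖ ≤ 1 ∧
      ∀ i, ⟪ghat i, (‖wstar‖⁻¹ • wstar : EuclideanSpace ℝ (Fin n))⟫ = 1 / ‖wstar‖) := by
  have : Nonempty (Fin m) := ⟨⟨0, hm⟩⟩
  rw [one_div]
  exact ⟨isGreatest_chebyshevValues hsol hmin, norm_inv_norm_smul_le_one wstar,
    inner_smul_eq_of_forall_inner_eq_one hsol _⟩

/-- **Equivalence of the equality-constrained Chebyshev problem with the ConFIG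
minimum-norm system.** Let `ĝ i` be unit vectors such that the system `ĝ iᵀ w = 1`
is feasible, and let `w⋆` be its minimum `ℓ₂`-norm solution. Then the problem
`max r s.t. ĝ iᵀ v = r (∀ i), ‖v‖₂ ≤ 1` has optimal value `r̃ = 1/‖w⋆‖₂`, attained at
the direction `ṽ = w⋆/‖w⋆‖₂`. -/
theorem config_equivalence_min_norm
    (n m : ℕ) (hm : 0 < m)
    (ghat : Fin m → EuclideanSpace ℝ (Fin n)) (hunit : ∀ i, ‖ghat i‖ = 1)
    (wstar : EuclideanSpace ℝ (Fin n))
    (hsol : ∀ i, ⟪ghat i, wstar⟫ = 1)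
    (hmin : ∀ w : EuclideanSpace ℝ (Fin n), (∀ i, ⟪ghat i, w⟫ = 1) → ‖wstar‖ ≤ ‖w‖) :
    IsGreatest {r : ℝ | ∃ v : EuclideanSpace ℝ (Fin n), ‖v‖ ≤ 1 ∧
        ∀ i, ⟪ghat i, v⟫ = r} (1 / ‖wstar‖) ∧
    (‖(‖wstar‖⁻¹ • wstar : EuclideanSpace ℝ (Fin n))‖ ≤ 1 ∧
      ∀ i, ⟪ghat i, (‖wstar‖⁻¹ • wstar : EuclideanSpace ℝ (Fin n))⟫ = 1 / ‖wstar‖) :=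
  config_equivalence_min_norm_general n m hm ghat wstar hsol hmin
end

section
/- Let g_1,...,g_m ∈ R^n be nonzero and let w* = Σ_i α*_i ĝ_i with ĝ_i = g_i/‖g_i‖_2 and α* ∈ Δ^m an optimal dual solution with w* ≠ 0. Then the recovered direction v* = w*/‖w*‖_2 lies in both the primal cone K = cone(g_1,...,g_m) and its dual cone K*, i.e., v* belongs to the harmonized cone H = K ∩ K*. -/
open scoped RealInnerProductSpace

/-!
The optimal `w⋆` is the point of least norm in the convex hull of the `ĝ i`, i.e. the projection
of `0` onto it. The variational inequality of that projection, `⟪w⋆, x - w⋆⟫ ≥ 0` for every `x`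
in the hull, gives `⟪w⋆, ĝ i⟫ ≥ ‖w⋆‖² ≥ 0`, and rescaling by `‖g i‖` and `‖w⋆‖⁻¹` keeps the sign.
Membership in the primal cone is immediate, since `v⋆` is a nonnegative combination of the `g i`.
-/

section MinNorm

variable {E : Type*} [NormedAddCommGroup E] [InnerProductSpace ℝ E]

theorem sq_norm_le_real_inner_of_isMinOn_norm {K : Set E} (hK : Convex ℝ K) {w x : E}
    (hw : w ∈ K) (hmin : IsMinOn (‖·‖) K w) (hx : x ∈ K) : ‖w‖ ^ 2 ≤ ⟪w, x⟫ := by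
  have : Nonempty K := ⟨⟨w, hw⟩⟩
  have hproj : ‖0 - w‖ = ⨅ y : K, ‖0 - (y : E)‖ := by
    refine le_antisymm (le_ciInf fun y => ?_)
      (ciInf_le (f := fun y : K => ‖0 - (y : E)‖) ⟨0, ?_⟩ ⟨w, hw⟩)
    · simpa using isMinOn_iff.mp hmin y y.2
    · rintro _ ⟨y, rfl⟩
      positivity
  have hvar := (norm_eq_iInf_iff_real_inner_le_zero hK hw).mp hproj x hx
  rw [zero_sub, inner_neg_left, inner_sub_right, real_inner_self_eq_norm_sq] at hvar
  linarith

theorem sq_norm_le_real_inner_of_isMinOn_stdSimplex {ι : Type*} [Fintype ι] (v : ι → E)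
    {a : ι → ℝ} (ha : a ∈ stdSimplex ℝ ι)
    (hmin : ∀ b ∈ stdSimplex ℝ ι, ‖∑ i, a i • v i‖ ≤ ‖∑ i, b i • v i‖) (j : ι) :
    ‖∑ i, a i • v i‖ ^ 2 ≤ ⟪∑ i, a i • v i, v j⟫ := by
  classical
  set L := Fintype.linearCombination ℝ v
  refine sq_norm_le_real_inner_of_isMinOn_norm ((convex_stdSimplex ℝ ι).linear_image L)
    ⟨a, ha, Fintype.linearCombination_apply ℝ v a⟩ ?_
    ⟨Pi.single j 1, single_mem_stdSimplex ℝ j, by simp [L, Fintype.linearCombination_apply]⟩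
  rintro _ ⟨b, hb, rfl⟩
  simpa [L, Fintype.linearCombination_apply] using hmin b hb

end MinNorm

theorem chebyshev_direction_in_harmonized_cone_general
    (n m : ℕ) (g : Fin m → EuclideanSpace ℝ (Fin n))
    (ghat : Fin m → EuclideanSpace ℝ (Fin n)) (hghat : ∀ i, ghat i = ‖g i‖⁻¹ • g i)
    (αstar : Fin m → ℝ) (hα : (∀ i, 0 ≤ αstar i) ∧ (∑ i, αstar i) = 1)
    (hαopt : ∀ α : Fin m → ℝ, (∀ i, 0 ≤ α i) → (∑ i, α i) = 1 →
      ‖∑ i, αstar i • ghat i‖ ≤ ‖∑ i, α i • ghat i‖)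
    (wstar : EuclideanSpace ℝ (Fin n)) (hw : wstar = ∑ i, αstar i • ghat i)
    (vstar : EuclideanSpace ℝ (Fin n)) (hv : vstar = ‖wstar‖⁻¹ • wstar) :
    (∃ lam : Fin m → ℝ, (∀ i, 0 ≤ lam i) ∧ vstar = ∑ i, lam i • g i) ∧
    (∀ i, 0 ≤ ⟪g i, vstar⟫) := by
  constructor
  · refine ⟨fun i => ‖wstar‖⁻¹ * (αstar i * ‖g i‖⁻¹), fun i => ?_, ?_⟩
    · have := hα.1 i
      positivity
    · simp only [hv, hw, hghat, Finset.smul_sum, smul_smul]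
  · intro i
    have hinner : ‖wstar‖ ^ 2 ≤ ⟪wstar, ghat i⟫ := by
      rw [hw]
      exact sq_norm_le_real_inner_of_isMinOn_stdSimplex ghat hα
        (fun b hb => hαopt b hb.1 hb.2) i
    have hg_smul : g i = ‖g i‖ • ghat i := by
      rcases eq_or_ne (g i) 0 with h | h
      · simp [h]
      · rw [hghat, smul_smul, mul_inv_cancel₀ (norm_ne_zero_iff.mpr h), one_smul]
    have hghat_nonneg : 0 ≤ ⟪ghat i, wstar⟫ :=
      real_inner_comm wstar (ghat i) ▸ (sq_nonneg _).trans hinner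
    rw [hv, hg_smul, real_inner_smul_right, real_inner_smul_left]
    positivity

/-- **The Chebyshev-center direction lies in the harmonized cone `H = K ∩ K*`.**
For nonzero `g i`, `ĝ i = g i / ‖g i‖₂`, and `α⋆ ∈ Δᵐ` optimal for the dual with
`w⋆ = ∑ i, α⋆ i • ĝ i ≠ 0`, the recovered direction `v⋆ = w⋆/‖w⋆‖₂` is a conic
combination of the `g i` (membership in `K`) and satisfies `g iᵀ v⋆ ≥ 0` for all `i`
(membership in `K*`). -/
theorem chebyshev_direction_in_harmonized_cone
    (n m : ℕ) (g : Fin m → EuclideanSpace ℝ (Fin n)) (hg : ∀ i, g i ≠ 0)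
    (ghat : Fin m → EuclideanSpace ℝ (Fin n)) (hghat : ∀ i, ghat i = ‖g i‖⁻¹ • g i)
    (αstar : Fin m → ℝ) (hα : (∀ i, 0 ≤ αstar i) ∧ (∑ i, αstar i) = 1)
    (hαopt : ∀ α : Fin m → ℝ, (∀ i, 0 ≤ α i) → (∑ i, α i) = 1 →
      ‖∑ i, αstar i • ghat i‖ ≤ ‖∑ i, α i • ghat i‖)
    (wstar : EuclideanSpace ℝ (Fin n)) (hw : wstar = ∑ i, αstar i • ghat i)
    (hwne : wstar ≠ 0)
    (vstar : EuclideanSpace ℝ (Fin n)) (hv : vstar = ‖wstar‖⁻¹ • wstar) :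
    (∃ lam : Fin m → ℝ, (∀ i, 0 ≤ lam i) ∧ vstar = ∑ i, lam i • g i) ∧
    (∀ i, 0 ≤ ⟪g i, vstar⟫) :=
  chebyshev_direction_in_harmonized_cone_general n m g ghat hghat αstar hα hαopt wstar hw vstar hv
end
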